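/- Reduction of weak upper gradients to real-valued compositions: let (X,d_X,m) be a metric measure space, (Y,d_Y) a separable metric space, h : X → Y Borel, (y_n) dense in Y, and η_{n,k} the 1-Lipschitz truncated distance functions at y_n with scale k. Let g ∈ L^p_loc(m), g ≥ 0. Then g is a p-weak upper gradient of h if and only if g is a p-weak upper gradient of η_{n,k} ∘ h : X → ℝ for every n, k. -/

import Mathlib

open MeasureTheory Set ENNReal Filter

/-- A curve in a metric space: a continuous map from a compact interval `[a,b]`. -/
structure Curve (X : Type*) [MetricSpace X] where
  a : ℝ
  b : ℝ
  hab : a ≤ b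
  toFun : ℝ → X
  cont : ContinuousOn toFun (Set.Icc a b)

namespace Curve

variable {X : Type*} [MetricSpace X]

/-- A curve is rectifiable if it has finite total variation. -/
def Rectifiable (γ : Curve X) : Prop :=
  eVariationOn γ.toFun (Set.Icc γ.a γ.b) ≠ ⊤

/-- The length of a curve: its total variation. -/
noncomputable def length (γ : Curve X) : ℝ :=
  (eVariationOn γ.toFun (Set.Icc γ.a γ.b)).toReal

/-- Arclength up to time `t`. -/
noncomputable def arclen (γ : Curve X) (t : ℝ) : ℝ :=
  (eVariationOn γ.toFun (Set.Icc γ.a t)).toReal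

/-- The unit speed parametrization of a curve. -/
noncomputable def unitParam (γ : Curve X) (s : ℝ) : X :=
  γ.toFun (sInf {t | t ∈ Set.Icc γ.a γ.b ∧ s ≤ γ.arclen t})

/-- The path integral `∫_γ ρ ds` of a Borel function along a curve, computed along
the unit speed parametrization. -/
noncomputable def pathIntegral (γ : Curve X) (ρ : X → ℝ≥0∞) : ℝ≥0∞ :=
  ∫⁻ s in Set.Icc 0 γ.length, ρ (γ.unitParam s)

/-- A curve is absolutely continuous if its increments are bounded by the integral of
an integrable function. -/
def IsAC (γ : Curve X) : Prop :=
  ∃ h : ℝ → ℝ, IntegrableOn h (Set.Icc γ.a γ.b) ∧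
    ∀ s t, γ.a ≤ s → s ≤ t → t ≤ γ.b →
      dist (γ.toFun s) (γ.toFun t) ≤ ∫ r in s..t, h r

/-- The image curve under a continuous map. -/
def map (γ : Curve X) {Y : Type*} [MetricSpace Y] (φ : X → Y) (hφ : Continuous φ) :
    Curve Y :=
  ⟨γ.a, γ.b, γ.hab, φ ∘ γ.toFun, hφ.comp_continuousOn γ.cont⟩

/-- A curve lies in a set `U`. -/
def In (γ : Curve X) (U : Set X) : Prop :=
  ∀ t ∈ Set.Icc γ.a γ.b, γ.toFun t ∈ U

end Curve

/-- Admissibility of a Borel function for a curve family. -/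
def Admissible {X : Type*} [MetricSpace X] [MeasurableSpace X]
    (ρ : X → ℝ≥0∞) (Γ : Set (Curve X)) : Prop :=
  Measurable ρ ∧ ∀ γ ∈ Γ, γ.Rectifiable → 1 ≤ γ.pathIntegral ρ

/-- The conformal `p`-modulus of a curve family. -/
noncomputable def PMod {X : Type*} [MetricSpace X] [MeasurableSpace X]
    (p : ℝ) (m : Measure X) (Γ : Set (Curve X)) : ℝ≥0∞ :=
  ⨅ (ρ : X → ℝ≥0∞) (_ : Admissible ρ Γ), ∫⁻ x, ρ x ^ p ∂m

/-- `g` is a `p`-weak upper gradient of `h : X → Y`: the upper gradient inequality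
holds along `Mod_p`-almost every curve. -/
def IsWUG {X : Type*} [MetricSpace X] [MeasurableSpace X] {Y : Type*} [PseudoMetricSpace Y]
    (p : ℝ) (m : Measure X) (h : X → Y) (g : X → ℝ≥0∞) : Prop :=
  Measurable g ∧ ∃ N : Set (Curve X), PMod p m N = 0 ∧
    ∀ γ : Curve X, γ ∉ N → γ.Rectifiable →
      ENNReal.ofReal (dist (h (γ.toFun γ.a)) (h (γ.toFun γ.b))) ≤ γ.pathIntegral g

/-- `g` is a `p`-weak upper gradient of `h` on the set `U` (with respect to the
restricted measure and curves lying in `U`). -/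
def IsWUGOn {X : Type*} [MetricSpace X] [MeasurableSpace X] {Y : Type*} [PseudoMetricSpace Y]
    (p : ℝ) (m : Measure X) (U : Set X) (h : X → Y) (g : X → ℝ≥0∞) : Prop :=
  Measurable g ∧ ∃ N : Set (Curve X), PMod p (m.restrict U) N = 0 ∧
    ∀ γ : Curve X, γ.In U → γ ∉ N → γ.Rectifiable →
      ENNReal.ofReal (dist (h (γ.toFun γ.a)) (h (γ.toFun γ.b))) ≤ γ.pathIntegral g

/-- Local `p`-integrability of a nonnegative Borel function. -/
def LocPInt {X : Type*} [MetricSpace X] [MeasurableSpace X]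
    (p : ℝ) (m : Measure X) (g : X → ℝ≥0∞) : Prop :=
  ∀ x : X, ∃ U : Set X, IsOpen U ∧ x ∈ U ∧ ∫⁻ y in U, g y ^ p ∂m < ⊤

/-- Local `p`-integrability on a subset. -/
def LocPIntOn {X : Type*} [MetricSpace X] [MeasurableSpace X]
    (p : ℝ) (m : Measure X) (U : Set X) (g : X → ℝ≥0∞) : Prop :=
  ∀ x ∈ U, ∃ V : Set X, IsOpen V ∧ x ∈ V ∧ ∫⁻ y in V ∩ U, g y ^ p ∂m < ⊤

/-- The truncated distance function `η_{y₀,r}`. -/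
noncomputable def eta {Y : Type*} [MetricSpace Y] (y₀ : Y) (r : ℝ) (y : Y) : ℝ :=
  if dist y y₀ < r then dist y y₀
  else if dist y y₀ < 2 * r then 2 * r - dist y y₀
  else 0

/-! Each `η` is `1`-Lipschitz, so a weak upper gradient of `h` is one of every `η ∘ h`.
Conversely, the exceptional curve families of the countably many `η_{n,k} ∘ h` have a
`Mod_p`-null union, and off it the inequality for `h` follows because, by density of `(y_n)`,
`d(a, b)` is the supremum of `|η_{n,k}(a) - η_{n,k}(b)|` over `n, k`. -/

lemma dist_eta_le {Y : Type*} [MetricSpace Y] (y₀ : Y) (r : ℝ) (a b : Y) :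
    dist (eta y₀ r a) (eta y₀ r b) ≤ dist a b := by
  have hd := abs_le.mp (abs_dist_sub_le a b y₀)
  have ha : 0 ≤ dist a y₀ := dist_nonneg
  have hb : 0 ≤ dist b y₀ := dist_nonneg
  rw [Real.dist_eq]
  unfold eta
  split_ifs <;> (rw [abs_sub_le_iff]; constructor <;> linarith [hd.1, hd.2])

lemma eta_of_dist_lt {Y : Type*} [MetricSpace Y] {y₀ y : Y} {r : ℝ} (hy : dist y y₀ < r) :
    eta y₀ r y = dist y y₀ :=
  if_pos hy

/-- Centred at a point of the dense sequence within `ε / 2` of `a`, and with a radius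
exceeding the distances from `a` and `b` to the centre, `η` recovers `dist a b` up to `ε`. -/
lemma ofReal_dist_eq_iSup_eta {Y : Type*} [MetricSpace Y] {y : ℕ → Y} (hy : DenseRange y)
    (a b : Y) :
    ENNReal.ofReal (dist a b) =
      ⨆ (n : ℕ) (k : ℕ+), ENNReal.ofReal (dist (eta (y n) (k : ℕ) a) (eta (y n) (k : ℕ) b)) := by
  refine le_antisymm (ENNReal.le_of_forall_pos_le_add fun ε hε _ => ?_)
    (iSup₂_le fun n k => ENNReal.ofReal_le_ofReal (dist_eta_le _ _ a b))
  obtain ⟨n, hn⟩ := hy.exists_dist_lt a (half_pos (NNReal.coe_pos.mpr hε))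
  obtain ⟨K, hK⟩ := exists_nat_gt (max (dist a (y n)) (dist b (y n)))
  have hk : max (dist a (y n)) (dist b (y n)) < (K.succPNat : ℕ) :=
    hK.trans_le (by exact_mod_cast K.le_succ)
  rw [max_lt_iff] at hk
  have hdist :
      dist a b - ε ≤ dist (eta (y n) (K.succPNat : ℕ) a) (eta (y n) (K.succPNat : ℕ) b) := by
    rw [eta_of_dist_lt hk.1, eta_of_dist_lt hk.2, Real.dist_eq, abs_sub_comm]
    linarith [le_abs_self (dist b (y n) - dist a (y n)), dist_triangle a (y n) b,
      dist_comm (y n) b]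
  calc ENNReal.ofReal (dist a b) ≤ ENNReal.ofReal (dist a b - ε) + ε := by
        simpa only [sub_add_cancel, ENNReal.ofReal_coe_nnreal] using
          ENNReal.ofReal_add_le (p := dist a b - ε) (q := ε)
    _ ≤ _ := add_le_add_left ((ENNReal.ofReal_le_ofReal hdist).trans
        (le_iSup₂_of_le n K.succPNat le_rfl)) _

lemma exists_admissible_lintegral_lt_of_pMod_lt {X : Type*} [MetricSpace X]
    [MeasurableSpace X] {p : ℝ} {m : Measure X} {Γ : Set (Curve X)} {c : ℝ≥0∞}
    (hΓ : PMod p m Γ < c) : ∃ ρ, Admissible ρ Γ ∧ ∫⁻ x, ρ x ^ p ∂m < c := by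
  simpa only [PMod, iInf_lt_iff, exists_prop] using hΓ

/-- If `ρ i` is admissible for `Γ i` with `∫ ρ i ^ p < δ i`, then the `ℓ^p`-sum
`(∑ ρ i ^ p) ^ (1/p)` is admissible for `⋃ Γ i` with `p`-energy `∑ ∫ ρ i ^ p ≤ ∑ δ i`. -/
lemma pMod_iUnion_eq_zero {X : Type*} [MetricSpace X] [MeasurableSpace X] {ι : Type*}
    [Countable ι] {p : ℝ} (hp : 0 < p) (m : Measure X) (Γ : ι → Set (Curve X))
    (hΓ : ∀ i, PMod p m (Γ i) = 0) : PMod p m (⋃ i, Γ i) = 0 := by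
  refine le_antisymm (ENNReal.le_of_forall_pos_le_add fun ε hε _ => ?_) zero_le
  obtain ⟨δ, hδpos, hδsum⟩ :=
    ENNReal.exists_pos_sum_of_countable (ENNReal.coe_ne_zero.mpr hε.ne') ι
  choose ρ hadm hint using fun i => exists_admissible_lintegral_lt_of_pMod_lt
    ((hΓ i).trans_lt (ENNReal.coe_pos.mpr (hδpos i)))
  set S : X → ℝ≥0∞ := fun x => (∑' i, ρ i x ^ p) ^ (1 / p)
  have hSp : ∀ x, S x ^ p = ∑' i, ρ i x ^ p := fun x => by
    rw [← ENNReal.rpow_mul, one_div_mul_cancel hp.ne', ENNReal.rpow_one]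
  have hρS : ∀ i x, ρ i x ≤ S x := fun i x => by
    rw [← ENNReal.rpow_le_rpow_iff hp, hSp]
    exact ENNReal.le_tsum i
  have hadmS : Admissible S (⋃ i, Γ i) := by
    refine ⟨(Measurable.tsum fun i => (hadm i).1.pow_const p).pow_const _,
      fun γ hγ hrect => ?_⟩
    obtain ⟨i, hi⟩ := mem_iUnion.mp hγ
    exact ((hadm i).2 γ hi hrect).trans (lintegral_mono fun s => hρS i _)
  calc PMod p m (⋃ i, Γ i) ≤ ∫⁻ x, S x ^ p ∂m := iInf₂_le S hadmS
    _ = ∑' i, ∫⁻ x, ρ i x ^ p ∂m := by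
        simp_rw [hSp]
        exact lintegral_tsum fun i => ((hadm i).1.pow_const p).aemeasurable
    _ ≤ ∑' i, (δ i : ℝ≥0∞) := ENNReal.tsum_le_tsum fun i => (hint i).le
    _ ≤ 0 + ε := by rw [zero_add]; exact hδsum.le

lemma IsWUG.comp_lipschitzWith {X : Type*} [MetricSpace X] [MeasurableSpace X]
    {Y Z : Type*} [PseudoMetricSpace Y] [PseudoMetricSpace Z] {p : ℝ} {m : Measure X}
    {h : X → Y} {g : X → ℝ≥0∞} {φ : Y → Z} (hφ : LipschitzWith 1 φ) (hg : IsWUG p m h g) :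
    IsWUG p m (φ ∘ h) g := by
  obtain ⟨hgm, N, hN0, hN⟩ := hg
  refine ⟨hgm, N, hN0, fun γ hγ hrect => le_trans ?_ (hN γ hγ hrect)⟩
  exact ENNReal.ofReal_le_ofReal (by simpa using hφ.dist_le_mul _ _)

theorem isWUG_iff_eta_comp_general {X : Type*} [MetricSpace X] [MeasurableSpace X]
    {Y : Type*} [MetricSpace Y]
    (p : ℝ) (hp : 1 < p) (m : Measure X)
    (h : X → Y)
    (y : ℕ → Y) (hy : DenseRange y)
    (g : X → ℝ≥0∞) (hgm : Measurable g) :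
    IsWUG p m h g ↔
      ∀ n : ℕ, ∀ k : ℕ+, IsWUG p m (fun x => eta (y n) ((k : ℕ) : ℝ) (h x)) g := by
  refine ⟨fun hg n k => hg.comp_lipschitzWith (LipschitzWith.mk_one (dist_eta_le _ _)),
    fun H => ?_⟩
  choose N hN0 hN using fun n k => (H n k).2
  refine ⟨hgm, ⋃ n, ⋃ k, N n k, ?_, fun γ hγ hrect => ?_⟩
  · have hp0 : 0 < p := zero_lt_one.trans hp
    exact pMod_iUnion_eq_zero hp0 m _ fun n => pMod_iUnion_eq_zero hp0 m _ (hN0 n)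
  · simp only [mem_iUnion, not_exists] at hγ
    rw [ofReal_dist_eq_iSup_eta hy]
    exact iSup₂_le fun n k => hN n k γ (hγ n k) hrect

/-- Reduction to real-valued compositions: for a Borel map `h : X → Y` into a separable
metric space, a dense sequence `(y_n)` and the truncated distance functions `η_{n,k}`,
a nonnegative `g ∈ L^p_loc(m)` is a `p`-weak upper gradient of `h` iff it is a `p`-weak
upper gradient of `η_{n,k} ∘ h` for every `n` and every `k ≥ 1`. -/
theorem isWUG_iff_eta_comp {X : Type*} [MetricSpace X] [MeasurableSpace X] [BorelSpace X]
    {Y : Type*} [MetricSpace Y] [TopologicalSpace.SeparableSpace Y]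
    [MeasurableSpace Y] [BorelSpace Y]
    (p : ℝ) (hp : 1 < p) (m : Measure X)
    (h : X → Y) (hh : Measurable h)
    (y : ℕ → Y) (hy : DenseRange y)
    (g : X → ℝ≥0∞) (hgm : Measurable g) (hloc : LocPInt p m g) :
    IsWUG p m h g ↔
      ∀ n : ℕ, ∀ k : ℕ+, IsWUG p m (fun x => eta (y n) ((k : ℕ) : ℝ) (h x)) g :=
  isWUG_iff_eta_comp_general p hp m h y hy g hgm
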